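/- Let g : 𝔽₂ⁿ → {−1,1} and 𝒟 a distribution on 𝔽₂ⁿ. If for every S ⊆ [n] with |S| ≤ k', Pr_{x∼𝒟}[g(x) ≠ χ_S(x)] = 1/2, then for every ℓ ≥ 1 and every function h : (𝔽₂^ℓ)ⁿ → ℝ of Fourier degree at most ℓk', E_{y∼𝒟_{⊕ℓ}}[g_{⊕ℓ}(y)·h(y)] = 0; equivalently, g_{⊕ℓ} is at distance exactly 1/2 from every ±1-valued function of Fourier degree ≤ ℓk' under 𝒟_{⊕ℓ}. -/

import Mathlib

open Finset
open scoped Classical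

/-- A probability distribution given by a weight function on a finite type. -/
def IsDist {α : Type*} [Fintype α] (μ : α → ℝ) : Prop :=
  (∀ a, 0 ≤ μ a) ∧ ∑ a, μ a = 1

/-- Probability of an event under a weight function. -/
noncomputable def pr {α : Type*} [Fintype α] (μ : α → ℝ) (P : α → Prop) : ℝ :=
  ∑ a ∈ univ.filter P, μ a

/-- 𝔽₂-valued parity χ_S. -/
def chi2 {ι : Type*} (S : Finset ι) (x : ι → ZMod 2) : ZMod 2 :=
  ∑ i ∈ S, x i

/-- ±1-valued parity χ_S. -/
noncomputable def chi {ι : Type*} (S : Finset ι) (x : ι → ZMod 2) : ℝ :=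
  ∏ i ∈ S, (-1 : ℝ) ^ (x i).val

/-- Blockwise parity: (𝔽₂^ℓ)ⁿ → 𝔽₂ⁿ. -/
def blockPar {n ℓ : ℕ} (y : Fin n × Fin ℓ → ZMod 2) : Fin n → ZMod 2 :=
  fun i => ∑ j, y (i, j)

/-- The parity-substituted distribution 𝒟_{⊕ℓ}: each block is uniform among the
2^(ℓ-1) strings with the prescribed block parity. -/
noncomputable def parSub {n ℓ : ℕ} (μ : (Fin n → ZMod 2) → ℝ)
    (y : Fin n × Fin ℓ → ZMod 2) : ℝ :=
  μ (blockPar y) / 2 ^ ((ℓ - 1) * n)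

/-- A function has Fourier degree at most `D`. -/
noncomputable def HasDegLE {ι : Type*} [Fintype ι] (h : (ι → ZMod 2) → ℝ) (D : ℕ) : Prop :=
  ∃ c : Finset ι → ℝ, (∀ S, c S ≠ 0 → S.card ≤ D) ∧
    ∀ x, h x = ∑ S : Finset ι, c S * chi S x

/-- Binary decision trees querying coordinates indexed by `ι`. -/
inductive DTree (ι : Type*) where
  | leaf : Bool → DTree ι
  | node : ι → DTree ι → DTree ι → DTree ι

namespace DTree

variable {ι : Type*}

/-- 𝔽₂-valued evaluation. -/
def eval : DTree ι → (ι → ZMod 2) → ZMod 2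
  | leaf b, _ => if b then 1 else 0
  | node i L R, x => if x i = 1 then eval R x else eval L x

/-- ±1-valued evaluation (0 ↦ 1, 1 ↦ -1). -/
noncomputable def evalpm (T : DTree ι) (x : ι → ZMod 2) : ℝ :=
  if eval T x = 0 then 1 else -1

/-- Number of leaves. -/
def size : DTree ι → ℕ
  | leaf _ => 1
  | node _ L R => size L + size R

/-- Depth. -/
def depth : DTree ι → ℕ
  | leaf _ => 0
  | node _ L R => max (depth L) (depth R) + 1

/-- `Truncation d T T'` : `T'` is obtained from `T` by truncating every path at
depth `d`, replacing the cut subtrees by arbitrary leaves. -/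
inductive Truncation : ℕ → DTree ι → DTree ι → Prop
  | leaf (d : ℕ) (b : Bool) : Truncation d (leaf b) (leaf b)
  | cut (T : DTree ι) (b : Bool) : Truncation 0 T (leaf b)
  | node (d : ℕ) (i : ι) (L R L' R' : DTree ι) :
      Truncation d L L' → Truncation d R R' →
      Truncation (d + 1) (node i L R) (node i L' R')

/-- The collection of sets of variables queried along individual root-to-leaf paths. -/
def pathVars [DecidableEq ι] : DTree ι → Finset (Finset ι)
  | leaf _ => {∅}
  | node i L R => (pathVars L ∪ pathVars R).image (insert i)

/-- Fourier coefficient of (the ±1 version of) a decision tree. -/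
noncomputable def fourierCoeff [Fintype ι] (T : DTree ι) (S : Finset ι) : ℝ :=
  (∑ x : ι → ZMod 2, T.evalpm x * chi S x) / Fintype.card (ι → ZMod 2)

end DTree

/-!
Expanding `h` into characters, it suffices to show that `g (blockPar y)` is uncorrelated under
`parSub μ` with every `χ_S`, `#S ≤ ℓ * k'`. If `S` meets some block in a proper nonempty subset,
flipping one bit of that block inside `S` and one outside preserves all block parities, hence the
weight and `g (blockPar y)`, but negates `χ_S`, so the correlation vanishes. Otherwise `S` is a
union of full blocks indexed by some `T` with `#T ≤ k'`, and `χ_S = χ_T ∘ blockPar`. As `blockPar`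
is a surjective additive map, all its fibres have `2 ^ ((ℓ - 1) * n)` points, and the correlation
becomes `E_μ[g χ_T] = 1 - 2 Pr_μ[g ≠ χ_T] = 0`.
-/

section Parity

variable {ι : Type*}

theorem neg_one_pow_val_add (a b : ZMod 2) :
    (-1 : ℝ) ^ (a + b).val = (-1) ^ a.val * (-1) ^ b.val := by
  rw [ZMod.val_add, ← neg_one_pow_eq_pow_mod_two, pow_add]

theorem chi_eq_neg_one_pow_chi2 (S : Finset ι) (x : ι → ZMod 2) :
    chi S x = (-1) ^ (chi2 S x).val := by
  induction S using Finset.cons_induction with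
  | empty => simp [chi, chi2]
  | cons i S hi ih =>
    rw [chi, chi2, prod_cons, sum_cons, neg_one_pow_val_add, ← chi, ← chi2, ih]

theorem chi_eq_one_or_eq_neg_one (S : Finset ι) (x : ι → ZMod 2) :
    chi S x = 1 ∨ chi S x = -1 := by
  rw [chi_eq_neg_one_pow_chi2]
  exact neg_one_pow_eq_or ℝ _

theorem chi_add (S : Finset ι) (x y : ι → ZMod 2) : chi S (x + y) = chi S x * chi S y := by
  simp only [chi, Pi.add_apply, neg_one_pow_val_add, prod_mul_distrib]

theorem chi_single_one [DecidableEq ι] (S : Finset ι) (i : ι) :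
    chi S (Pi.single i 1) = if i ∈ S then -1 else 1 := by
  have hval : ∀ j, (-1 : ℝ) ^ (Pi.single (M := fun _ => ZMod 2) i 1 j).val =
      if i = j then -1 else 1 := by
    intro j
    rcases eq_or_ne i j with rfl | hij
    · simp [ZMod.val_one]
    · simp [hij, Ne.symm hij]
  simp only [chi, hval, prod_ite_eq]

end Parity

theorem sum_mul_mul_eq_one_sub_two_mul_pr {α : Type*} [Fintype α] {μ : α → ℝ}
    (hμ : ∑ a, μ a = 1) {f g : α → ℝ} (hf : ∀ a, f a = 1 ∨ f a = -1)
    (hg : ∀ a, g a = 1 ∨ g a = -1) :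
    ∑ a, μ a * (f a * g a) = 1 - 2 * pr μ (fun a => f a ≠ g a) := by
  have hterm : ∀ a, μ a * (f a * g a) = μ a - 2 * if f a ≠ g a then μ a else 0 := by
    intro a
    rcases hf a with hfa | hfa <;> rcases hg a with hga | hga <;> norm_num [hfa, hga] <;> ring
  simp only [hterm, sum_sub_distrib, ← mul_sum, hμ, sum_ite, sum_const_zero, add_zero]
  unfold pr
  congr!

theorem sum_comp_of_surjective_addMonoidHom {G M R : Type*} [AddGroup G] [Fintype G]
    [AddMonoid M] [Fintype M] [DecidableEq M] [AddCommMonoid R]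
    (f : G →+ M) (hf : Function.Surjective f) (F : M → R) :
    ∑ x, F (f x) = #{x | f x = 0} • ∑ m, F m := by
  rw [sum_comp, image_univ_of_surjective hf, smul_sum]
  refine sum_congr rfl fun m _ => ?_
  rw [AddMonoidHom.card_fiber_eq_of_mem_range f (hf m) ⟨0, map_zero f⟩]

theorem card_ker_mul_card_of_surjective {G M : Type*} [AddGroup G] [Fintype G]
    [AddMonoid M] [Fintype M] [DecidableEq M]
    (f : G →+ M) (hf : Function.Surjective f) :
    #{x | f x = 0} * Fintype.card M = Fintype.card G := by
  simpa [eq_comm] using sum_comp_of_surjective_addMonoidHom f hf (fun _ => (1 : ℕ))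

section BlockParity

variable {n ℓ : ℕ}

theorem blockPar_add (y z : Fin n × Fin ℓ → ZMod 2) :
    blockPar (y + z) = blockPar y + blockPar z := by
  ext; simp [blockPar, sum_add_distrib]

def blockParHom : (Fin n × Fin ℓ → ZMod 2) →+ (Fin n → ZMod 2) where
  toFun := blockPar
  map_zero' := by ext; simp [blockPar]
  map_add' := blockPar_add

theorem blockPar_single (i : Fin n) (j : Fin ℓ) (a : ZMod 2) :
    blockPar (Pi.single (i, j) a) = Pi.single i a := by
  ext i'
  rcases eq_or_ne i' i with rfl | hi
  · simp [blockPar, Pi.single_apply]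
  · simp [blockPar, hi]

theorem blockPar_surjective (hℓ : 1 ≤ ℓ) :
    Function.Surjective (blockPar : (Fin n × Fin ℓ → ZMod 2) → Fin n → ZMod 2) := by
  intro x
  refine ⟨fun p => if p.2 = ⟨0, hℓ⟩ then x p.1 else 0, ?_⟩
  ext i
  simp [blockPar]

theorem card_blockPar_eq_zero (hℓ : 1 ≤ ℓ) :
    #{y : Fin n × Fin ℓ → ZMod 2 | blockPar y = 0} = 2 ^ ((ℓ - 1) * n) := by
  have h := card_ker_mul_card_of_surjective (blockParHom (n := n) (ℓ := ℓ))
    (blockPar_surjective hℓ)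
  have hpow : 2 ^ ((ℓ - 1) * n) * 2 ^ n = 2 ^ (n * ℓ) := by
    rw [← pow_add]; congr 1
    obtain ⟨m, rfl⟩ := Nat.exists_eq_add_of_le' hℓ
    simp [Nat.mul_add, mul_comm]
  simp only [Fintype.card_fun, Fintype.card_prod, Fintype.card_fin, ZMod.card] at h
  exact Nat.eq_of_mul_eq_mul_right (by positivity) (h.trans hpow.symm)

theorem sum_comp_blockPar (hℓ : 1 ≤ ℓ) (F : (Fin n → ZMod 2) → ℝ) :
    ∑ y : Fin n × Fin ℓ → ZMod 2, F (blockPar y) = 2 ^ ((ℓ - 1) * n) * ∑ x, F x := by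
  have h := sum_comp_of_surjective_addMonoidHom (blockParHom (n := n) (ℓ := ℓ))
    (blockPar_surjective hℓ) F
  rw [nsmul_eq_mul] at h
  exact_mod_cast h.trans (by rw [← card_blockPar_eq_zero hℓ]; rfl)

end BlockParity

theorem sum_comp_mul_chi_eq_zero_of_mem_ker {ι M : Type*} [Fintype ι] [DecidableEq ι]
    [AddMonoid M] (f : (ι → ZMod 2) →+ M) (F : M → ℝ) (S : Finset ι) {u : ι → ZMod 2}
    (hu : f u = 0) (hχ : chi S u = -1) :
    ∑ y, F (f y) * chi S y = 0 := by
  have hshift := Equiv.sum_comp (Equiv.addRight u) (fun y => F (f y) * chi S y)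
  simp only [Equiv.coe_addRight, map_add, hu, add_zero, chi_add, hχ, mul_neg, mul_one,
    sum_neg_distrib] at hshift
  linarith

theorem eq_image_fst_product_univ_or_exists_mem_notMem {ι κ : Type*} [DecidableEq ι]
    [Fintype κ] (S : Finset (ι × κ)) :
    S = S.image Prod.fst ×ˢ univ ∨ ∃ i j₀ j₁, (i, j₀) ∈ S ∧ (i, j₁) ∉ S := by
  by_contra! h
  obtain ⟨hne, hfull⟩ := h
  refine hne (ext fun ⟨i, j⟩ => ⟨fun hij => ?_, fun hij => ?_⟩)
  · exact mem_product.2 ⟨mem_image_of_mem _ hij, mem_univ _⟩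
  · obtain ⟨⟨i, j₀⟩, hij₀, rfl⟩ := mem_image.1 (mem_product.1 hij).1
    exact hfull i j₀ j hij₀

theorem chi_product_univ {n ℓ : ℕ} (T : Finset (Fin n)) (y : Fin n × Fin ℓ → ZMod 2) :
    chi (T ×ˢ univ) y = chi T (blockPar y) := by
  rw [chi_eq_neg_one_pow_chi2, chi_eq_neg_one_pow_chi2, chi2, chi2, sum_product]
  rfl

theorem sum_blockPar_mul_chi_eq_zero {n k' ℓ : ℕ} {μ : (Fin n → ZMod 2) → ℝ}
    (hμ : ∑ x, μ x = 1) {g : (Fin n → ZMod 2) → ℝ} (hg : ∀ x, g x = 1 ∨ g x = -1)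
    (hpar : ∀ S : Finset (Fin n), #S ≤ k' → pr μ (fun x => g x ≠ chi S x) = 1 / 2)
    (hℓ : 1 ≤ ℓ) (S : Finset (Fin n × Fin ℓ)) (hS : #S ≤ ℓ * k') :
    ∑ y, μ (blockPar y) * g (blockPar y) * chi S y = 0 := by
  obtain hblock | ⟨i, j₀, j₁, h₀, h₁⟩ := eq_image_fst_product_univ_or_exists_mem_notMem S
  · set T := S.image Prod.fst
    have hT : #T ≤ k' := by
      rw [hblock, card_product, card_univ, Fintype.card_fin, mul_comm] at hS
      exact le_of_mul_le_mul_left hS hℓ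
    calc ∑ y, μ (blockPar y) * g (blockPar y) * chi S y
        = ∑ y : Fin n × Fin ℓ → ZMod 2, (fun x => μ x * (g x * chi T x)) (blockPar y) := by
          rw [hblock]
          simp only [chi_product_univ, mul_assoc]
      _ = 2 ^ ((ℓ - 1) * n) * (1 - 2 * pr μ (fun x => g x ≠ chi T x)) := by
          rw [sum_comp_blockPar hℓ (fun x => μ x * (g x * chi T x)),
            sum_mul_mul_eq_one_sub_two_mul_pr hμ hg (chi_eq_one_or_eq_neg_one T)]
      _ = 0 := by rw [hpar T hT]; ring
  · refine sum_comp_mul_chi_eq_zero_of_mem_ker blockParHom (fun x => μ x * g x) S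
      (u := Pi.single (i, j₀) 1 + Pi.single (i, j₁) 1) ?_ ?_
    · change blockPar _ = 0
      rw [blockPar_add, blockPar_single, blockPar_single, ← Pi.single_add,
        show (1 : ZMod 2) + 1 = 0 from rfl, Pi.single_zero]
    · rw [chi_add, chi_single_one, chi_single_one, if_pos h₀, if_neg h₁, mul_one]

theorem stmt8 {n : ℕ} (k' : ℕ) (μ : (Fin n → ZMod 2) → ℝ) (hμ : IsDist μ)
    (g : (Fin n → ZMod 2) → ℝ) (hg : ∀ x, g x = 1 ∨ g x = -1)
    (hpar : ∀ S : Finset (Fin n), S.card ≤ k' → pr μ (fun x => g x ≠ chi S x) = 1 / 2)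
    (ℓ : ℕ) (hℓ : 1 ≤ ℓ) (h : (Fin n × Fin ℓ → ZMod 2) → ℝ)
    (hh : HasDegLE h (ℓ * k')) :
    ∑ y, parSub μ y * (g (blockPar y) * h y) = 0 := by
  obtain ⟨c, hc, hrep⟩ := hh
  have hchar (S : Finset (Fin n × Fin ℓ)) :
      c S * ∑ y, μ (blockPar y) * g (blockPar y) * chi S y = 0 := by
    by_cases hS : c S = 0
    · rw [hS, zero_mul]
    · rw [sum_blockPar_mul_chi_eq_zero hμ.2 hg hpar hℓ S (hc S hS), mul_zero]
  calc ∑ y, parSub μ y * (g (blockPar y) * h y)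
      = (∑ S, c S * ∑ y, μ (blockPar y) * g (blockPar y) * chi S y) / 2 ^ ((ℓ - 1) * n) := by
        simp only [parSub, hrep, mul_sum, sum_div]
        rw [sum_comm]
        exact sum_congr rfl fun S _ => sum_congr rfl fun y _ => by ring
    _ = 0 := by simp only [hchar, sum_const_zero, zero_div]
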